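/- arXiv:2510.10374 — 3 statements merged into one kernel-verified Lean document; each statement's English description precedes it below -/
import Mathlib

section
/- Let X be a mean-zero σ-subgaussian random variable with variance σ_X². Then for every t with 0 < t < 1/(2σ²), the cumulant generating function of X² − E[X²] satisfies log E[exp(t(X² − σ_X²))] ≤ 8σ⁴t²/(1 − 2σ²t). That is, X² − E[X²] is (16σ⁴, 2σ²)-subgamma on the right tail. -/
/-!
Chernoff's bound gives `P(X² ≥ v) ≤ 2 exp (-v / (2σ²))`. By the layer-cake formula
`E[exp (tX²) - 1 - tX²] = ∫₀^∞ P(X² ≥ v) (t e^{tv} - t) dv`, and integrating the tail bound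
against `t e^{tv} - t` gives `8σ⁴t² / (1 - 2σ²t)`. Finally `E[X²] = σ_X²` and `log x ≤ x - 1` give
`log E[exp (t (X² - σ_X²))] = log E[exp (tX²)] - tσ_X² ≤ E[exp (tX²) - 1 - tX²]`.

The subgaussian hypothesis only carries information once every `exp (sX)` is integrable; this
follows from integrability of `exp (tX²)` since `s x ≤ s² / (4t) + t x²`. If `exp (tX²)` is not
integrable, the integral in the statement is `0` by convention and the claim is trivial.
-/

open MeasureTheory ProbabilityTheory Real Set

section

variable {Ω : Type*} [MeasurableSpace Ω] {μ : Measure Ω}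

lemma exp_mul_sub_eq_exp_mul_exp (t y a : ℝ) :
    exp (t * (y - a)) = exp (-(t * a)) * exp (t * y) := by
  rw [← exp_add]
  ring_nf

lemma integrable_exp_mul_sub_iff {Y : Ω → ℝ} {t a : ℝ} :
    Integrable (fun ω ↦ exp (t * (Y ω - a))) μ ↔ Integrable (fun ω ↦ exp (t * Y ω)) μ := by
  simp_rw [exp_mul_sub_eq_exp_mul_exp]
  exact integrable_const_mul_iff (isUnit_iff_ne_zero.2 (exp_pos _).ne') _

lemma integrable_exp_mul_of_integrable_exp_mul_sq {X : Ω → ℝ} (hX : AEMeasurable X μ) {t : ℝ}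
    (ht : 0 < t) (h : Integrable (fun ω ↦ exp (t * X ω ^ 2)) μ) (s : ℝ) :
    Integrable (fun ω ↦ exp (s * X ω)) μ := by
  refine (h.const_mul (exp (s ^ 2 / (4 * t)))).mono' (by fun_prop) (ae_of_all _ fun ω ↦ ?_)
  rw [norm_eq_abs, abs_exp, ← exp_add, exp_le_exp, ← sub_nonneg]
  have key : s ^ 2 / (4 * t) + t * X ω ^ 2 - s * X ω = (2 * t * X ω - s) ^ 2 / (4 * t) := by
    field_simp; ring
  rw [key]
  positivity

lemma ProbabilityTheory.HasSubgaussianMGF.measureReal_sq_ge_le [IsFiniteMeasure μ] {X : Ω → ℝ}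
    {c : NNReal} (h : HasSubgaussianMGF X c μ) {v : ℝ} (hv : 0 ≤ v) :
    μ.real {ω | v ≤ X ω ^ 2} ≤ 2 * exp (-v / (2 * c)) := by
  have hsq : √v ^ 2 = v := sq_sqrt hv
  have hsub : {ω | v ≤ X ω ^ 2} ⊆ {ω | √v ≤ X ω} ∪ {ω | √v ≤ (-X) ω} := by
    intro ω hω
    exact le_abs.1 (sqrt_sq_eq_abs (X ω) ▸ sqrt_le_sqrt hω)
  calc μ.real {ω | v ≤ X ω ^ 2}
      ≤ μ.real {ω | √v ≤ X ω} + μ.real {ω | √v ≤ (-X) ω} :=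
        (measureReal_mono hsub).trans (measureReal_union_le _ _)
    _ ≤ exp (-v / (2 * c)) + exp (-v / (2 * c)) := by
        have h₁ := h.measure_ge_le (sqrt_nonneg v)
        have h₂ := h.neg.measure_ge_le (sqrt_nonneg v)
        rw [hsq] at h₁ h₂
        exact add_le_add h₁ h₂
    _ = 2 * exp (-v / (2 * c)) := by ring

lemma integral_mul_exp_mul_sub_eq (t x : ℝ) :
    ∫ v in (0 : ℝ)..x, (t * exp (t * v) - t) = exp (t * x) - 1 - t * x := by
  have hderiv (v : ℝ) : HasDerivAt (fun y ↦ exp (t * y) - t * y) (t * exp (t * v) - t) v := by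
    have hlin : HasDerivAt (fun y ↦ t * y) t v := by simpa using (hasDerivAt_id v).const_mul t
    exact (hlin.exp.sub hlin).congr_deriv (by ring)
  have hcont : Continuous fun v ↦ t * exp (t * v) - t := by fun_prop
  rw [intervalIntegral.integral_eq_sub_of_hasDerivAt (fun v _ ↦ hderiv v)
    (hcont.intervalIntegrable _ _)]
  simp only [mul_zero, exp_zero]
  ring

lemma mul_exp_mul_sub_nonneg {t v : ℝ} (ht : 0 ≤ t) (hv : 0 ≤ v) : 0 ≤ t * exp (t * v) - t := by
  nlinarith [one_le_exp (mul_nonneg ht hv)]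

lemma lintegral_ofReal_exp_mul_sub_one_sub_mul_eq {Y : Ω → ℝ} (hY : AEMeasurable Y μ)
    (hY0 : 0 ≤ᵐ[μ] Y) {t : ℝ} (ht : 0 ≤ t) :
    ∫⁻ ω, ENNReal.ofReal (exp (t * Y ω) - 1 - t * Y ω) ∂μ =
      ∫⁻ v in Ioi 0, μ {ω | v ≤ Y ω} * ENNReal.ofReal (t * exp (t * v) - t) := by
  simp_rw [← integral_mul_exp_mul_sub_eq]
  exact lintegral_comp_eq_lintegral_meas_le_mul μ hY0 hY
    (fun x _ ↦ (by fun_prop : Continuous fun v ↦ t * exp (t * v) - t).intervalIntegrable _ _)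
    ((ae_restrict_iff' measurableSet_Ioi).2 (ae_of_all _ fun v hv ↦
      mul_exp_mul_sub_nonneg ht (le_of_lt hv)))

lemma exp_neg_div_mul_mul_exp_mul_sub {b t v : ℝ} :
    exp (-v / b) * (t * exp (t * v) - t) = t * exp ((t - b⁻¹) * v) - t * exp (-b⁻¹ * v) := by
  rw [mul_sub, mul_left_comm, ← exp_add]
  ring_nf

lemma integrableOn_exp_neg_div_mul_mul_exp_mul_sub {b t : ℝ} (hb : 0 < b) (htb : b * t < 1) :
    IntegrableOn (fun v ↦ exp (-v / b) * (t * exp (t * v) - t)) (Ioi 0) := by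
  have hrate : t - b⁻¹ < 0 := by rwa [sub_neg, ← one_div, lt_div_iff₀' hb]
  simp_rw [exp_neg_div_mul_mul_exp_mul_sub]
  exact ((integrableOn_exp_mul_Ioi hrate 0).const_mul t).sub
    ((integrableOn_exp_mul_Ioi (neg_neg_of_pos (inv_pos.2 hb)) 0).const_mul t)

lemma integral_exp_neg_div_mul_mul_exp_mul_sub {b t : ℝ} (hb : 0 < b) (htb : b * t < 1) :
    ∫ v in Ioi 0, exp (-v / b) * (t * exp (t * v) - t) = b ^ 2 * t ^ 2 / (1 - b * t) := by
  have hrate : t - b⁻¹ < 0 := by rwa [sub_neg, ← one_div, lt_div_iff₀' hb]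
  have hb' : -b⁻¹ < 0 := neg_neg_of_pos (inv_pos.2 hb)
  simp_rw [exp_neg_div_mul_mul_exp_mul_sub]
  rw [integral_sub ((integrableOn_exp_mul_Ioi hrate 0).const_mul t)
    ((integrableOn_exp_mul_Ioi hb' 0).const_mul t), integral_const_mul, integral_const_mul,
    integral_exp_mul_Ioi hrate, integral_exp_mul_Ioi hb']
  simp only [mul_zero, exp_zero]
  have h₁ : 1 - t * b ≠ 0 := by linarith
  have h₂ : t - b⁻¹ = -(1 - b * t) / b := by field_simp; ring
  rw [h₂]
  field_simp
  ring

lemma integral_exp_mul_sub_one_sub_mul_le_of_measureReal_ge_le [IsFiniteMeasure μ] {Y : Ω → ℝ}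
    (hY : AEMeasurable Y μ) (hY0 : 0 ≤ᵐ[μ] Y) {C b t : ℝ} (hb : 0 < b) (ht : 0 ≤ t)
    (htb : b * t < 1) (htail : ∀ v > 0, μ.real {ω | v ≤ Y ω} ≤ C * exp (-v / b)) :
    ∫ ω, (exp (t * Y ω) - 1 - t * Y ω) ∂μ ≤ C * (b ^ 2 * t ^ 2 / (1 - b * t)) := by
  have hC : 0 ≤ C :=
    nonneg_of_mul_nonneg_left (measureReal_nonneg.trans (htail 1 one_pos)) (exp_pos _)
  have hnonneg : 0 ≤ᵐ[(volume : Measure ℝ).restrict (Ioi 0)]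
      fun v ↦ C * (exp (-v / b) * (t * exp (t * v) - t)) :=
    (ae_restrict_iff' measurableSet_Ioi).2 (ae_of_all _ fun v hv ↦
      mul_nonneg hC (mul_nonneg (exp_pos _).le (mul_exp_mul_sub_nonneg ht (le_of_lt hv))))
  have hlayer : ∫⁻ ω, ENNReal.ofReal (exp (t * Y ω) - 1 - t * Y ω) ∂μ ≤
      ENNReal.ofReal (C * (b ^ 2 * t ^ 2 / (1 - b * t))) := by
    rw [lintegral_ofReal_exp_mul_sub_one_sub_mul_eq hY hY0 ht,
      ← integral_exp_neg_div_mul_mul_exp_mul_sub hb htb, ← integral_const_mul,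
      ofReal_integral_eq_lintegral_ofReal
        ((integrableOn_exp_neg_div_mul_mul_exp_mul_sub hb htb).const_mul C) hnonneg]
    refine setLIntegral_mono' measurableSet_Ioi fun v hv ↦ ?_
    rw [← mul_assoc, ENNReal.ofReal_mul' (mul_exp_mul_sub_nonneg ht (le_of_lt hv)),
      ← ofReal_measureReal]
    gcongr
    exact htail v hv
  have hint_nonneg : 0 ≤ᵐ[μ] fun ω ↦ exp (t * Y ω) - 1 - t * Y ω :=
    ae_of_all _ fun ω ↦ by simp only [Pi.zero_apply]; linarith [add_one_le_exp (t * Y ω)]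
  rw [integral_eq_lintegral_of_nonneg_ae hint_nonneg (by fun_prop)]
  exact ENNReal.toReal_le_of_le_ofReal (by positivity) hlayer

lemma log_integral_exp_mul_sub_integral_le [IsProbabilityMeasure μ] {Y : Ω → ℝ}
    (hY : Integrable Y μ) {t : ℝ} (hexp : Integrable (fun ω ↦ exp (t * Y ω)) μ) :
    log (∫ ω, exp (t * (Y ω - ∫ ω, Y ω ∂μ)) ∂μ) ≤ ∫ ω, (exp (t * Y ω) - 1 - t * Y ω) ∂μ := by
  have hpos : 0 < ∫ ω, exp (t * Y ω) ∂μ := integral_exp_pos hexp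
  simp_rw [exp_mul_sub_eq_exp_mul_exp]
  rw [integral_const_mul, log_mul (exp_pos _).ne' hpos.ne', log_exp,
    integral_sub (f := fun ω ↦ exp (t * Y ω) - 1) (hexp.sub (integrable_const 1))
      (hY.const_mul t),
    integral_sub hexp (integrable_const 1), integral_const_mul]
  simp only [integral_const, probReal_univ, smul_eq_mul, one_mul]
  linarith [log_le_sub_one_of_pos hpos]

end

/-- Right-tail subgamma bound: for a mean-zero `σ`-subgaussian `X` with variance `σ_X²`,
for `0 < t < 1/(2σ²)`, `log E[exp(t(X² − σ_X²))] ≤ 8σ⁴t²/(1 − 2σ²t)`;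
i.e. `X² − E[X²]` is `(16σ⁴, 2σ²)`-subgamma on the right tail. -/
theorem stmt4 {Ω : Type*} [MeasurableSpace Ω] (μ : Measure Ω) [IsProbabilityMeasure μ]
    (X : Ω → ℝ) (hX : Measurable X) (σ σX : ℝ) (hσ : 0 < σ)
    (hmean : ∫ ω, X ω ∂μ = 0)
    (hvar : variance X μ = σX ^ 2)
    (hsub : ∀ s : ℝ, ∫ ω, Real.exp (s * X ω) ∂μ ≤ Real.exp (s ^ 2 * σ ^ 2 / 2)) :
    ∀ t : ℝ, 0 < t → t < 1 / (2 * σ ^ 2) →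
      Real.log (∫ ω, Real.exp (t * (X ω ^ 2 - σX ^ 2)) ∂μ) ≤
        8 * σ ^ 4 * t ^ 2 / (1 - 2 * σ ^ 2 * t) := by
  intro t ht htσ
  have hbt : 2 * σ ^ 2 * t < 1 := by rwa [lt_div_iff₀' (by positivity)] at htσ
  by_cases hg : Integrable (fun ω ↦ exp (t * (X ω ^ 2 - σX ^ 2))) μ
  swap
  · rw [integral_undef hg, log_zero]
    exact div_nonneg (by positivity) (by linarith)
  rw [integrable_exp_mul_sub_iff] at hg
  have hσ2 : ((σ ^ 2).toNNReal : ℝ) = σ ^ 2 := Real.coe_toNNReal _ (sq_nonneg σ)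
  have hsubG : HasSubgaussianMGF X (σ ^ 2).toNNReal μ :=
    ⟨integrable_exp_mul_of_integrable_exp_mul_sq hX.aemeasurable ht hg,
      fun s ↦ (hsub s).trans_eq (by rw [hσ2]; ring_nf)⟩
  have hX2 : MemLp X 2 μ := hsubG.memLp 2
  have hmoment : ∫ ω, X ω ^ 2 ∂μ = σX ^ 2 := by
    simpa [hmean, hvar] using (variance_eq_sub hX2).symm
  calc log (∫ ω, exp (t * (X ω ^ 2 - σX ^ 2)) ∂μ)
      ≤ ∫ ω, (exp (t * X ω ^ 2) - 1 - t * X ω ^ 2) ∂μ :=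
        hmoment ▸ log_integral_exp_mul_sub_integral_le hX2.integrable_sq hg
    _ ≤ 2 * ((2 * σ ^ 2) ^ 2 * t ^ 2 / (1 - 2 * σ ^ 2 * t)) :=
        integral_exp_mul_sub_one_sub_mul_le_of_measureReal_ge_le (hX.pow_const 2).aemeasurable
          (ae_of_all _ fun ω ↦ sq_nonneg _) (by positivity) ht.le hbt
          fun v hv ↦ hσ2 ▸ hsubG.measureReal_sq_ge_le hv.le
    _ = 8 * σ ^ 4 * t ^ 2 / (1 - 2 * σ ^ 2 * t) := by ring
end

section
/- Fix reals a, b ≥ 0, C > 0, and an integer n ≥ 2 with n > a + b. For x ∈ (a/n, 1 − b/n) set f(x) = 1/(nx − a) + C/((n−1)((1−x)n − b)). Then the minimum value of f over this interval equals (1 + √(C/(n−1)))²/(n − (a+b)), attained at x* = ((n−b)√((n−1)/C) + a)/(n(1 + √((n−1)/C))). -/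
/-- One-dimensional optimization: for `a, b ≥ 0`, `C > 0`, `n ≥ 2` an integer with
`n > a + b`, the function `f(x) = 1/(nx − a) + C/((n−1)((1−x)n − b))` on
`(a/n, 1 − b/n)` attains its minimum `(1 + √(C/(n−1)))² / (n − (a+b))` at
`x* = ((n−b)√((n−1)/C) + a)/(n(1 + √((n−1)/C)))`. -/
theorem stmt11 (a b C : ℝ) (ha : 0 ≤ a) (hb : 0 ≤ b) (hC : 0 < C)
    (n : ℕ) (hn : 2 ≤ n) (hab : a + b < (n : ℝ)) :
    let f : ℝ → ℝ := fun x =>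
      1 / ((n : ℝ) * x - a) + C / (((n : ℝ) - 1) * ((1 - x) * (n : ℝ) - b))
    let xstar : ℝ := (((n : ℝ) - b) * Real.sqrt (((n : ℝ) - 1) / C) + a) /
      ((n : ℝ) * (1 + Real.sqrt (((n : ℝ) - 1) / C)))
    a / (n : ℝ) < xstar ∧ xstar < 1 - b / (n : ℝ) ∧
    f xstar = (1 + Real.sqrt (C / ((n : ℝ) - 1))) ^ 2 / ((n : ℝ) - (a + b)) ∧
    ∀ x : ℝ, a / (n : ℝ) < x → x < 1 - b / (n : ℝ) → f xstar ≤ f x := by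
  intro f xstar
  set N := (n : ℝ) with hNdef
  have hN2 : (2:ℝ) ≤ N := by rw [hNdef]; exact_mod_cast hn
  have hN1 : (0:ℝ) < N - 1 := by linarith
  have hN0 : (0:ℝ) < N := by linarith
  have hD : 0 < N - (a + b) := by linarith
  set t := Real.sqrt (C / (N - 1)) with htdef
  set s := Real.sqrt ((N - 1) / C) with hsdef
  have ht : 0 < t := Real.sqrt_pos.mpr (by positivity)
  have hs : 0 < s := Real.sqrt_pos.mpr (by positivity)
  have ht2 : t ^ 2 = C / (N - 1) := Real.sq_sqrt (by positivity)
  have hts : t * s = 1 := by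
    rw [htdef, hsdef, ← Real.sqrt_mul (by positivity)]
    rw [show C / (N - 1) * ((N - 1) / C) = 1 by field_simp]
    exact Real.sqrt_one
  have hC' : C = t ^ 2 * (N - 1) := by rw [ht2]; field_simp
  have hs' : s = 1 / t := by
    rw [eq_div_iff ht.ne']; linear_combination hts
  have h1s : (0:ℝ) < 1 + s := by linarith
  have hxstar : xstar = ((N - b) * s + a) / (N * (1 + s)) := rfl
  have hu : N * xstar - a = s * (N - (a + b)) / (1 + s) := by
    rw [hxstar]; field_simp; ring
  have hv : (1 - xstar) * N - b = (N - (a + b)) / (1 + s) := by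
    rw [hxstar]; field_simp; ring
  have hupos : 0 < N * xstar - a := by rw [hu]; positivity
  have hvpos : 0 < (1 - xstar) * N - b := by rw [hv]; positivity
  have hval : f xstar = (1 + t) ^ 2 / (N - (a + b)) := by
    show 1 / (N * xstar - a) + C / ((N - 1) * ((1 - xstar) * N - b))
      = (1 + t) ^ 2 / (N - (a + b))
    rw [hu, hv, hs', hC']
    field_simp
    ring
  refine ⟨?_, ?_, hval, ?_⟩
  · rw [div_lt_iff₀ hN0]
    have := mul_comm xstar N
    linarith
  · have h : b / N < 1 - xstar := by
      rw [div_lt_iff₀ hN0]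
      have := mul_comm (1 - xstar) N
      linarith
    linarith
  · intro x hx1 hx2
    have hu0 : 0 < N * x - a := by
      have h1 := (div_lt_iff₀ hN0).mp hx1
      have := mul_comm x N
      linarith
    have hv0 : 0 < (1 - x) * N - b := by
      have h : b / N < 1 - x := by linarith
      have h1 := (div_lt_iff₀ hN0).mp h
      have := mul_comm (1 - x) N
      linarith
    set u := N * x - a with hudef
    set v := (1 - x) * N - b with hvdef
    have huv : u + v = N - (a + b) := by rw [hudef, hvdef]; ring
    have key : (1 + t) ^ 2 / (N - (a + b)) ≤ 1 / u + t ^ 2 / v := by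
      rw [div_add_div _ _ hu0.ne' hv0.ne', div_le_div_iff₀ hD (mul_pos hu0 hv0), ← huv]
      nlinarith [sq_nonneg (t * u - v), mul_pos hu0 hv0, ht]
    have heq : 1 / u + t ^ 2 / v = f x := by
      show 1 / u + t ^ 2 / v = 1 / (N * x - a) + C / ((N - 1) * ((1 - x) * N - b))
      rw [← hudef, ← hvdef, hC']
      field_simp
    rw [hval, ← heq]
    exact key
end

section
/- Let σ_1,...,σ_K > 0 with σ_min² = min_k σ_k², let Σ_2 = ∑_k σ_k², and let ε⁻, ε⁺ ≥ 0 with ε⁻ < σ_min². Suppose estimates σ̂_k² satisfy σ_k² − ε⁻ ≤ σ̂_k² ≤ σ_k² + ε⁺ for all k, and define λ_k = σ̂_k²/∑_j σ̂_j². Then max_k σ_k²/λ_k − Σ_2 ≤ (Σ_2 − σ_min² + (K−1)ε⁺)/(1 − ε⁻/σ_min²) − (Σ_2 − σ_min²). In particular, max_k σ_k²/λ_k − Σ_2 ≤ (K−1)ε⁺ + (Σ_2/σ_min² − 1)ε⁻ + ((K−1)ε⁺ε⁻)/(σ_min² − ε⁻) + ((Σ_2 − σ_min²)(ε⁻)²)/(σ_min²(σ_min²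 − ε⁻)). -/
open Finset

lemma aux15 (E S2 m t e : ℝ) (hE : 0 ≤ E) (he : 0 ≤ e) (hem : e < m) (hmt : m ≤ t)
    (htS : t ≤ S2) :
    t + t * (S2 - t + E) / (t - e) - S2 ≤ m * (S2 - m + E) / (m - e) - (S2 - m) := by
  have h1 : 0 < t - e := by linarith
  have h2 : 0 < m - e := by linarith
  have key : t + t * (S2 - t + E) / (t - e) - S2 = (E * t + (S2 - t) * e) / (t - e) := by
    field_simp
    ring
  have key2 : m * (S2 - m + E) / (m - e) - (S2 - m) = (E * m + (S2 - m) * e) / (m - e) := by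
    field_simp
    ring
  rw [key, key2, div_le_div_iff₀ h1 h2]
  nlinarith [mul_nonneg (mul_nonneg he (sub_nonneg.2 hmt)) (by linarith : (0:ℝ) ≤ E + S2 - e)]

/-- Key deterministic bound for the `p = ∞` regret analysis: if the variance estimates
satisfy `σ_k² − ε⁻ ≤ σ̂_k² ≤ σ_k² + ε⁺` and `λ_k = σ̂_k² / ∑_j σ̂_j²`, then
`max_k σ_k²/λ_k − Σ₂` is bounded as stated. -/
theorem stmt15 (K : ℕ) (hK : 1 ≤ K) (σ : Fin K → ℝ) (hσ : ∀ k, 0 < σ k)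
    (εm εp : ℝ) (hεm : 0 ≤ εm) (hεp : 0 ≤ εp) (hlt : εm < ⨅ k, σ k ^ 2)
    (est : Fin K → ℝ) (hest : ∀ k, σ k ^ 2 - εm ≤ est k ∧ est k ≤ σ k ^ 2 + εp) :
    let Sig2 : ℝ := ∑ k, σ k ^ 2
    let smin : ℝ := ⨅ k, σ k ^ 2
    let lam : Fin K → ℝ := fun k => est k / ∑ j, est j
    (⨆ k, σ k ^ 2 / lam k) - Sig2 ≤
      (Sig2 - smin + ((K : ℝ) - 1) * εp) / (1 - εm / smin) - (Sig2 - smin) ∧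
    (⨆ k, σ k ^ 2 / lam k) - Sig2 ≤
      ((K : ℝ) - 1) * εp + (Sig2 / smin - 1) * εm
        + (((K : ℝ) - 1) * εp * εm) / (smin - εm)
        + ((Sig2 - smin) * εm ^ 2) / (smin * (smin - εm)) := by
  intro Sig2 smin lam
  haveI : Nonempty (Fin K) := Fin.pos_iff_nonempty.1 hK
  obtain ⟨k0, hk0⟩ := exists_eq_ciInf_of_finite (f := fun k => σ k ^ 2)
  have hsmin_le : ∀ k, smin ≤ σ k ^ 2 := fun k => ciInf_le (Finite.bddBelow_range _) k
  have hsmin_pos : 0 < smin := by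
    have : (0:ℝ) < σ k0 ^ 2 := pow_pos (hσ k0) 2
    simpa [smin, hk0] using this
  have hem : εm < smin := hlt
  have hd : ∀ k, 0 < est k := fun k => lt_of_lt_of_le (by linarith [hsmin_le k]) (hest k).1
  have hSpos : 0 < ∑ j, est j := Finset.sum_pos (fun j _ => hd j) univ_nonempty
  have hsigle : ∀ k, σ k ^ 2 ≤ Sig2 := fun k =>
    Finset.single_le_sum (fun j _ => sq_nonneg (σ j)) (mem_univ k)
  have hK1 : (0:ℝ) ≤ (K:ℝ) - 1 := by
    have : (1:ℝ) ≤ (K:ℝ) := by exact_mod_cast hK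
    linarith
  have hE : 0 ≤ ((K:ℝ) - 1) * εp := mul_nonneg hK1 hεp
  set E : ℝ := ((K:ℝ) - 1) * εp with hEdef
  have main : ∀ k, σ k ^ 2 / lam k - Sig2 ≤
      smin * (Sig2 - smin + E) / (smin - εm) - (Sig2 - smin) := by
    intro k
    have hSsum : ∑ j, est j ≤ est k + (Sig2 - σ k ^ 2 + E) := by
      have h0 : ∑ j, est j = est k + ∑ j ∈ univ.erase k, est j :=
        (Finset.add_sum_erase univ est (mem_univ k)).symm
      have h1 : ∑ j ∈ univ.erase k, est j ≤ ∑ j ∈ univ.erase k, (σ j ^ 2 + εp) :=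
        Finset.sum_le_sum (fun j _ => (hest j).2)
      have h2 : ∑ j ∈ univ.erase k, (σ j ^ 2 + εp)
          = (∑ j ∈ univ.erase k, σ j ^ 2) + ((univ.erase k).card : ℝ) * εp := by
        rw [Finset.sum_add_distrib, Finset.sum_const, nsmul_eq_mul]
      have h3 : ∑ j ∈ univ.erase k, σ j ^ 2 = Sig2 - σ k ^ 2 := by
        have h : σ k ^ 2 + ∑ j ∈ univ.erase k, σ j ^ 2 = ∑ j, σ j ^ 2 :=
          Finset.add_sum_erase univ (fun j => σ j ^ 2) (mem_univ k)
        simp only [Sig2]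
        linarith [h]
      have h4 : ((univ.erase k).card : ℝ) = (K:ℝ) - 1 := by
        rw [Finset.card_erase_of_mem (mem_univ k)]
        simp [Nat.cast_sub hK]
      rw [h0]
      rw [h2, h3, h4] at h1
      linarith
    have hdk := hd k
    have hden : 0 < σ k ^ 2 - εm := by linarith [hsmin_le k]
    have hW : 0 ≤ Sig2 - σ k ^ 2 + E := by linarith [hsigle k]
    have h1 : σ k ^ 2 / lam k = σ k ^ 2 * (∑ j, est j) / est k := by
      simp only [lam]
      rw [div_div_eq_mul_div]
    have h2 : σ k ^ 2 * (∑ j, est j) / est k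
        ≤ σ k ^ 2 * (est k + (Sig2 - σ k ^ 2 + E)) / est k := by
      gcongr σ k ^ 2 * ?_ / est k
    have h3 : σ k ^ 2 * (est k + (Sig2 - σ k ^ 2 + E)) / est k
        = σ k ^ 2 + σ k ^ 2 * (Sig2 - σ k ^ 2 + E) / est k := by
      field_simp
    have h4 : σ k ^ 2 * (Sig2 - σ k ^ 2 + E) / est k
        ≤ σ k ^ 2 * (Sig2 - σ k ^ 2 + E) / (σ k ^ 2 - εm) := by
      exact div_le_div_of_nonneg_left (mul_nonneg (sq_nonneg _) hW) hden (hest k).1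
    have h5 := aux15 E Sig2 smin (σ k ^ 2) εm hE hεm hem (hsmin_le k) (hsigle k)
    rw [h1]
    calc σ k ^ 2 * (∑ j, est j) / est k - Sig2
        ≤ σ k ^ 2 + σ k ^ 2 * (Sig2 - σ k ^ 2 + E) / est k - Sig2 := by
          rw [← h3]; linarith
      _ ≤ σ k ^ 2 + σ k ^ 2 * (Sig2 - σ k ^ 2 + E) / (σ k ^ 2 - εm) - Sig2 := by linarith
      _ ≤ smin * (Sig2 - smin + E) / (smin - εm) - (Sig2 - smin) := h5
  have hne1 : smin ≠ 0 := ne_of_gt hsmin_pos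
  have hne2 : smin - εm ≠ 0 := ne_of_gt (by linarith)
  have hform : (Sig2 - smin + E) / (1 - εm / smin) - (Sig2 - smin)
      = smin * (Sig2 - smin + E) / (smin - εm) - (Sig2 - smin) := by
    rw [sub_left_inj]
    rw [show (1 : ℝ) - εm / smin = (smin - εm) / smin by field_simp]
    rw [div_div_eq_mul_div]
    ring_nf
  have hsup : (⨆ k, σ k ^ 2 / lam k) - Sig2
      ≤ smin * (Sig2 - smin + E) / (smin - εm) - (Sig2 - smin) := by
    rw [sub_le_iff_le_add]
    exact ciSup_le fun k => by linarith [main k]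
  constructor
  · rw [hform]; exact hsup
  · have heq : smin * (Sig2 - smin + E) / (smin - εm) - (Sig2 - smin)
        = E + (Sig2 / smin - 1) * εm + (E * εm) / (smin - εm)
          + ((Sig2 - smin) * εm ^ 2) / (smin * (smin - εm)) := by
      field_simp
      ring
    calc (⨆ k, σ k ^ 2 / lam k) - Sig2
        ≤ smin * (Sig2 - smin + E) / (smin - εm) - (Sig2 - smin) := hsup
      _ = _ := heq
end
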